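/- arXiv:0908.4139 — 3 statements merged into one kernel-verified Lean document; each statement's English description precedes it below -/
import Mathlib

section
/- For a nonempty closed convex set K in a real Hilbert space H and any x ∉ K, the function d_K is differentiable at x with gradient (x − Π_K(x)) / d_K(x), and this gradient has norm 1. -/
/-!
With `p = P x` and `u = ‖x - p‖⁻¹ • (x - p)`, the projection inequality puts `K` in the half-space
`{k | ⟪u, k - p⟫ ≤ 0}`, so `z ↦ ⟪u, z - p⟫` lies below `d_K`, while `z ↦ ‖z - p‖` lies above it.
Both bounds agree with `d_K` at `x` and have gradient `u` there, so `d_K` is squeezed to the same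
gradient.
-/

open Topology Metric
open scoped RealInnerProductSpace

theorem HasFDerivAt.of_eventuallyLE_of_eventuallyLE {E : Type*} [NormedAddCommGroup E]
    [NormedSpace ℝ E] {l g h : E → ℝ} {f' : E →L[ℝ] ℝ} {x : E}
    (hl : HasFDerivAt l f' x) (hh : HasFDerivAt h f' x)
    (hlg : l ≤ᶠ[𝓝 x] g) (hgh : g ≤ᶠ[𝓝 x] h) (hlx : l x = g x) (hhx : h x = g x) :
    HasFDerivAt g f' x := by
  rw [hasFDerivAt_iff_isLittleO, hlx] at hl
  rw [hasFDerivAt_iff_isLittleO, hhx] at hh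
  refine hasFDerivAt_iff_isLittleO.2 <|
    (Asymptotics.IsBigO.of_bound' ?_).trans_isLittleO (hl.norm_left.add hh.norm_left)
  filter_upwards [hlg, hgh] with z hlgz hghz
  have hmax := abs_le_max_abs_abs (a := l z - g x - f' (z - x)) (b := g z - g x - f' (z - x))
    (c := h z - g x - f' (z - x)) (by gcongr) (by gcongr)
  simp only [Real.norm_eq_abs]
  exact hmax.trans ((max_le_add_of_nonneg (abs_nonneg _) (abs_nonneg _)).trans (le_abs_self _))

theorem hasGradientAt_norm_sub {H : Type*} [NormedAddCommGroup H] [InnerProductSpace ℝ H]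
    [CompleteSpace H] {p x : H} (hx : x ≠ p) :
    HasGradientAt (fun z => ‖z - p‖) (‖x - p‖⁻¹ • (x - p)) x := by
  have h := ((hasFDerivAt_id x).sub_const p).norm_sq.sqrt (by simpa [sub_eq_zero] using hx)
  simp only [id, Real.sqrt_sq (norm_nonneg _)] at h
  refine hasGradientAt_iff_hasFDerivAt.2 (h.congr_fderiv ?_)
  ext w
  simp only [ContinuousLinearMap.comp_id, smul_apply, coe_innerSL_apply,
    InnerProductSpace.toDual_apply_apply, real_inner_smul_left, smul_eq_mul, nsmul_eq_mul,
    Nat.cast_ofNat]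
  field_simp

theorem real_inner_sub_sub_nonpos_of_norm_eq_infDist {F : Type*} [NormedAddCommGroup F]
    [InnerProductSpace ℝ F] {K : Set F} (hK : Convex ℝ K) {x p : F} (hp : p ∈ K)
    (hxp : ‖x - p‖ = infDist x K) : ∀ k ∈ K, ⟪x - p, k - p⟫ ≤ 0 := by
  refine (norm_eq_iInf_iff_real_inner_le_zero hK hp).1 ?_
  simp only [hxp, infDist_eq_iInf, dist_eq_norm]

theorem real_inner_sub_le_infDist {F : Type*} [NormedAddCommGroup F] [InnerProductSpace ℝ F]
    {K : Set F} (hK : K.Nonempty) {u p : F} (hu : ‖u‖ ≤ 1) (hKu : ∀ k ∈ K, ⟪u, k - p⟫ ≤ 0)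
    (z : F) : ⟪u, z - p⟫ ≤ infDist z K := by
  refine (le_infDist hK).2 fun k hk => ?_
  calc ⟪u, z - p⟫ = ⟪u, z - k⟫ + ⟪u, k - p⟫ := by rw [← inner_add_right, sub_add_sub_cancel]
    _ ≤ ‖u‖ * ‖z - k‖ + 0 := add_le_add (real_inner_le_norm _ _) (hKu k hk)
    _ ≤ dist z k := by
      rw [add_zero, dist_eq_norm]
      exact mul_le_of_le_one_left (norm_nonneg _) hu

theorem hasGradient_dist_of_not_mem_general {H : Type*} [NormedAddCommGroup H]
    [InnerProductSpace ℝ H] [CompleteSpace H]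
    (K : Set H) (hKconv : Convex ℝ K)
    (P : H → H) (hPmem : ∀ x, P x ∈ K)
    (hPproj : ∀ x, ‖x - P x‖ = Metric.infDist x K)
    (x : H) (hx : 0 < Metric.infDist x K) :
    HasGradientAt (fun z => Metric.infDist z K)
        ((Metric.infDist x K)⁻¹ • (x - P x)) x ∧
      ‖(Metric.infDist x K)⁻¹ • (x - P x)‖ = 1 := by
  have hd := hPproj x
  have hxP : x - P x ≠ 0 := norm_pos_iff.1 (hd ▸ hx)
  rw [← hd]
  set u := ‖x - P x‖⁻¹ • (x - P x)
  have hu : ‖u‖ = 1 := norm_smul_inv_norm hxP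
  have hKu : ∀ k ∈ K, ⟪u, k - P x⟫ ≤ 0 := fun k hk => by
    rw [real_inner_smul_left]
    exact mul_nonpos_of_nonneg_of_nonpos (by positivity)
      (real_inner_sub_sub_nonpos_of_norm_eq_infDist hKconv (hPmem x) hd k hk)
  have hux : ⟪u, x - P x⟫ = ‖x - P x‖ := by
    rw [real_inner_smul_left, real_inner_self_eq_norm_sq]
    field_simp
  have hlower : HasFDerivAt (fun z => ⟪u, z - P x⟫) (InnerProductSpace.toDual ℝ H u) x := by
    simpa only [inner_sub_right, InnerProductSpace.toDual_apply_apply] using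
      (InnerProductSpace.toDual ℝ H u).hasFDerivAt.sub_const ⟪u, P x⟫
  have hupper := hasGradientAt_iff_hasFDerivAt.1 (hasGradientAt_norm_sub (sub_ne_zero.1 hxP))
  refine ⟨hasGradientAt_iff_hasFDerivAt.2 <| hlower.of_eventuallyLE_of_eventuallyLE hupper
    (.of_forall (real_inner_sub_le_infDist ⟨_, hPmem x⟩ hu.le hKu))
    (.of_forall fun z => (infDist_le_dist_of_mem (hPmem x)).trans_eq (dist_eq_norm _ _))
    (hux.trans hd) hd, hu⟩

/-- For a nonempty closed convex set `K` in a real Hilbert space and `x ∉ K`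
(i.e. `d_K(x) > 0`), the distance function `d_K` is differentiable at `x` with
gradient `(x − Π_K x)/d_K(x)`, which has norm one. -/
theorem hasGradient_dist_of_not_mem {H : Type*} [NormedAddCommGroup H]
    [InnerProductSpace ℝ H] [CompleteSpace H]
    (K : Set H) (hKne : K.Nonempty) (hKcl : IsClosed K) (hKconv : Convex ℝ K)
    (P : H → H) (hPmem : ∀ x, P x ∈ K)
    (hPproj : ∀ x, ‖x - P x‖ = Metric.infDist x K)
    (x : H) (hx : 0 < Metric.infDist x K) :
    HasGradientAt (fun z => Metric.infDist z K)
        ((Metric.infDist x K)⁻¹ • (x - P x)) x ∧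
      ‖(Metric.infDist x K)⁻¹ • (x - P x)‖ = 1 :=
  hasGradient_dist_of_not_mem_general K hKconv P hPmem hPproj x hx
end

section
/- With K, μ, ρ_ε as above, the measures ν_ε(dx) = ρ_ε(x) μ(dx) converge weakly as ε → 0 to the conditioned measure ν(I) = μ(K ∩ I)/μ(K). -/
/-!
Off the closed set `K` the distance `d_K` is positive, so `exp (-d_K² / ε) → 𝟙_K` pointwise as
`ε → 0⁺`, with values in `[0, 1]`. Since `μ` is finite, dominated convergence gives
`∫ exp (-d_K² / ε) f dμ → ∫_K f dμ` for bounded `f`, and in particular `Z_ε → μ(K) > 0`;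
the quotient of the two limits is `∫ f dν`.
-/

open MeasureTheory Filter Real Topology Metric Set

lemma tendsto_exp_neg_div_nhdsGT_zero {a : ℝ} (ha : 0 < a) :
    Tendsto (fun ε : ℝ => exp (-a / ε)) (𝓝[>] 0) (𝓝 0) := by
  have h : Tendsto (fun ε : ℝ => -a / ε) (𝓝[>] 0) atBot := by
    simpa only [Function.comp_def, neg_div, div_eq_mul_inv, neg_mul] using
      tendsto_neg_atTop_atBot.comp (tendsto_inv_nhdsGT_zero.const_mul_atTop ha)
  exact tendsto_exp_atBot.comp h

section PenaltyWeight

variable {X : Type*} [PseudoMetricSpace X] {K : Set X}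

lemma exp_neg_infDist_sq_div_le_one (K : Set X) {ε : ℝ} (hε : 0 ≤ ε) (x : X) :
    exp (-infDist x K ^ 2 / ε) ≤ 1 :=
  exp_le_one_iff.mpr (div_nonpos_of_nonpos_of_nonneg (neg_nonpos.mpr (sq_nonneg _)) hε)

lemma tendsto_exp_neg_infDist_sq_div (hK : IsClosed K) (hne : K.Nonempty) (x : X) :
    Tendsto (fun ε : ℝ => exp (-infDist x K ^ 2 / ε)) (𝓝[>] 0) (𝓝 (K.indicator 1 x)) := by
  by_cases hx : x ∈ K
  · simp [infDist_zero_of_mem hx, hx]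
  · rw [indicator_of_notMem hx]
    exact tendsto_exp_neg_div_nhdsGT_zero (pow_pos ((hK.notMem_iff_infDist_pos hne).mp hx) 2)

end PenaltyWeight

section NormalizedDensity

variable {X ι : Type*} [MeasurableSpace X] {μ : Measure X} [IsFiniteMeasure μ]
  {l : Filter ι} [l.IsCountablyGenerated] {g : ι → X → ℝ} {K : Set X} {f : X → ℝ} {C : ℝ}

lemma tendsto_integral_mul_of_tendsto_indicator (hg_meas : ∀ᶠ i in l, AEStronglyMeasurable (g i) μ)
    (hg_le : ∀ᶠ i in l, ∀ x, ‖g i x‖ ≤ 1)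
    (hg_lim : ∀ x, Tendsto (g · x) l (𝓝 (K.indicator 1 x))) (hK : MeasurableSet K)
    (hf : AEStronglyMeasurable f μ) (hfC : ∀ x, ‖f x‖ ≤ C) :
    Tendsto (fun i => ∫ x, g i x * f x ∂μ) l (𝓝 (∫ x in K, f x ∂μ)) := by
  have hlim : ∀ x, Tendsto (fun i => g i x * f x) l (𝓝 (K.indicator f x)) := fun x => by
    simpa [← indicator_mul_left] using (hg_lim x).mul_const (f x)
  rw [← integral_indicator hK]
  refine tendsto_integral_filter_of_dominated_convergence (fun _ => C)
    (hg_meas.mono fun i hi => hi.mul hf) ?_ (integrable_const C) (ae_of_all _ hlim)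
  filter_upwards [hg_le] with i hi
  refine ae_of_all _ fun x => ?_
  calc ‖g i x * f x‖ = ‖g i x‖ * ‖f x‖ := norm_mul _ _
    _ ≤ 1 * C := mul_le_mul (hi x) (hfC x) (norm_nonneg _) zero_le_one
    _ = C := one_mul C

lemma tendsto_integral_withDensity_normalized (hg_meas : ∀ᶠ i in l, Measurable (g i))
    (hg_nonneg : ∀ᶠ i in l, ∀ x, 0 ≤ g i x) (hg_le : ∀ᶠ i in l, ∀ x, g i x ≤ 1)
    (hg_lim : ∀ x, Tendsto (g · x) l (𝓝 (K.indicator 1 x))) (hK : MeasurableSet K)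
    (hμK : μ K ≠ 0) (hf : AEStronglyMeasurable f μ) (hfC : ∀ x, ‖f x‖ ≤ C) :
    Tendsto (fun i => ∫ x, f x ∂μ.withDensity
        (fun x => ENNReal.ofReal ((∫ y, g i y ∂μ)⁻¹ * g i x)))
      l (𝓝 (∫ x, f x ∂((μ K)⁻¹ • μ.restrict K))) := by
  have hg_norm : ∀ᶠ i in l, ∀ x, ‖g i x‖ ≤ 1 := by
    filter_upwards [hg_nonneg, hg_le] with i h0 h1 x
    rw [Real.norm_of_nonneg (h0 x)]
    exact h1 x
  have hg_aesm : ∀ᶠ i in l, AEStronglyMeasurable (g i) μ :=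
    hg_meas.mono fun i hi => hi.aestronglyMeasurable
  have hZ : Tendsto (fun i => ∫ y, g i y ∂μ) l (𝓝 (μ.real K)) := by
    simpa using tendsto_integral_mul_of_tendsto_indicator hg_aesm hg_norm hg_lim hK
      aestronglyMeasurable_const (f := 1) (C := 1) (fun _ => norm_one.le)
  have hN := tendsto_integral_mul_of_tendsto_indicator hg_aesm hg_norm hg_lim hK hf hfC
  have hμK_real : μ.real K ≠ 0 := (measureReal_ne_zero_iff).mpr hμK
  rw [integral_smul_measure, ENNReal.toReal_inv, smul_eq_mul]
  refine ((hZ.inv₀ hμK_real).mul hN).congr' ?_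
  filter_upwards [hg_meas, hg_nonneg] with i hmeas h0
  have hZ_nonneg : 0 ≤ (∫ y, g i y ∂μ)⁻¹ := inv_nonneg.mpr (integral_nonneg h0)
  rw [integral_withDensity_eq_integral_toReal_smul (by fun_prop)
    (ae_of_all _ fun _ => ENNReal.ofReal_lt_top), ← integral_const_mul]
  simp_rw [ENNReal.toReal_ofReal (mul_nonneg hZ_nonneg (h0 _)), smul_eq_mul, mul_assoc]

end NormalizedDensity

theorem penalized_measures_weak_convergence_general {H : Type*} [NormedAddCommGroup H]
    [MeasurableSpace H] [BorelSpace H]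
    (μ : Measure H) [IsProbabilityMeasure μ]
    (K : Set H) (hKcl : IsClosed K) (hK : 0 < μ K) :
    ∀ f : BoundedContinuousFunction H ℝ,
      Tendsto (fun ε : ℝ =>
          ∫ x, f x ∂(μ.withDensity (fun x => ENNReal.ofReal
            ((∫ y, Real.exp (-(Metric.infDist y K) ^ 2 / ε) ∂μ)⁻¹ *
              Real.exp (-(Metric.infDist x K) ^ 2 / ε)))))
        (nhdsWithin 0 (Set.Ioi 0))
        (nhds (∫ x, f x ∂((μ K)⁻¹ • μ.restrict K))) := fun f =>
  tendsto_integral_withDensity_normalized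
    (Eventually.of_forall fun ε => by fun_prop)
    (Eventually.of_forall fun ε x => (exp_pos _).le)
    (eventually_mem_nhdsWithin.mono fun ε hε => exp_neg_infDist_sq_div_le_one K (le_of_lt hε))
    (tendsto_exp_neg_infDist_sq_div hKcl (nonempty_of_measure_ne_zero hK.ne'))
    hKcl.measurableSet hK.ne' f.continuous.aestronglyMeasurable f.norm_coe_le_norm

/-- The penalized measures `ν_ε(dx) = ρ_ε(x) μ(dx)`, with
`ρ_ε = Z_ε⁻¹ exp(−d_K²/ε)`, converge weakly as `ε → 0⁺` to the conditioned
measure `ν = μ(K)⁻¹ μ|_K`. -/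
theorem penalized_measures_weak_convergence {H : Type*} [NormedAddCommGroup H]
    [InnerProductSpace ℝ H] [CompleteSpace H] [MeasurableSpace H] [BorelSpace H]
    (μ : Measure H) [IsProbabilityMeasure μ]
    (K : Set H) (hKcl : IsClosed K) (hKconv : Convex ℝ K) (hK : 0 < μ K) :
    ∀ f : BoundedContinuousFunction H ℝ,
      Tendsto (fun ε : ℝ =>
          ∫ x, f x ∂(μ.withDensity (fun x => ENNReal.ofReal
            ((∫ y, Real.exp (-(Metric.infDist y K) ^ 2 / ε) ∂μ)⁻¹ *
              Real.exp (-(Metric.infDist x K) ^ 2 / ε)))))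
        (nhdsWithin 0 (Set.Ioi 0))
        (nhds (∫ x, f x ∂((μ K)⁻¹ • μ.restrict K))) :=
  penalized_measures_weak_convergence_general μ K hKcl hK
end

section
/- Let μ be a probability measure on ℝ such that for some constant C, |∫_ℝ φ'(r) μ(dr)| ≤ C‖φ‖_∞ for all C¹ bounded functions φ with bounded derivative. Then μ is absolutely continuous with respect to Lebesgue measure. -/
/-!
Testing the hypothesis against `φ(x) = ∫_{-∞}^x g`, for a bump function `g` equal to `1` on
`[x - r, x + r]` and supported in `[x - 2r, x + 2r]`, gives `μ [x - r, x + r] ≤ ∫ g dμ ≤ C ∫ g ≤ 4Cr`.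
So `μ` is dominated by `2C` times Lebesgue measure on closed balls, hence everywhere, by the
Besicovitch–Vitali differentiation theorem.
-/

open MeasureTheory Filter Real Set Metric

def HasIntegrationByPartsBound (μ : Measure ℝ) (C : ℝ) : Prop :=
  ∀ φ : ℝ → ℝ, ContDiff ℝ 1 φ → (∃ M, ∀ x, |φ x| ≤ M) → (∃ M, ∀ x, |deriv φ x| ≤ M) →
    |∫ x, deriv φ x ∂μ| ≤ C * ⨆ x, |φ x|

theorem hasDerivAt_integral_Iic {g : ℝ → ℝ} (hg : Continuous g) (hgi : Integrable g) (x : ℝ) :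
    HasDerivAt (fun u => ∫ t in Iic u, g t) (g x) x := by
  have hsplit : (fun u => ∫ t in Iic u, g t) =
      fun u => (∫ t in (0 : ℝ)..u, g t) + ∫ t in Iic 0, g t := by
    funext u
    rw [← intervalIntegral.integral_Iic_sub_Iic hgi.integrableOn hgi.integrableOn, sub_add_cancel]
  rw [hsplit]
  exact ((hg.integral_hasStrictDerivAt 0 x).hasDerivAt).add_const _

namespace HasIntegrationByPartsBound

variable {μ : Measure ℝ} {C : ℝ}

theorem nonneg (hμ : HasIntegrationByPartsBound μ C) : 0 ≤ C := by
  have h := hμ (fun _ => 1) contDiff_const ⟨1, fun _ => by simp⟩ ⟨0, fun _ => by simp⟩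
  simpa using h

theorem integral_le {g : ℝ → ℝ} (hμ : HasIntegrationByPartsBound μ C) (hg : Continuous g)
    (hgi : Integrable g) (hg0 : 0 ≤ g) (hgb : ∃ M, ∀ x, |g x| ≤ M) :
    ∫ x, g x ∂μ ≤ C * ∫ x, g x := by
  set φ : ℝ → ℝ := fun u => ∫ t in Iic u, g t
  have hderiv : deriv φ = g := funext fun x => (hasDerivAt_integral_Iic hg hgi x).deriv
  have hφ : ContDiff ℝ 1 φ := contDiff_one_iff_deriv.2
    ⟨fun x => (hasDerivAt_integral_Iic hg hgi x).differentiableAt, hderiv ▸ hg⟩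
  have hφ_abs : ∀ x, |φ x| ≤ ∫ t, g t := fun x => by
    rw [abs_of_nonneg (setIntegral_nonneg measurableSet_Iic fun t _ => hg0 t)]
    exact setIntegral_le_integral hgi (Eventually.of_forall hg0)
  calc ∫ x, g x ∂μ = ∫ x, deriv φ x ∂μ := by rw [hderiv]
    _ ≤ |∫ x, deriv φ x ∂μ| := le_abs_self _
    _ ≤ C * ⨆ x, |φ x| := hμ φ hφ ⟨_, hφ_abs⟩ (hderiv ▸ hgb)
    _ ≤ C * ∫ x, g x := mul_le_mul_of_nonneg_left (ciSup_le hφ_abs) hμ.nonneg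

theorem measure_closedBall_le [IsFiniteMeasure μ] (hμ : HasIntegrationByPartsBound μ C) (x : ℝ)
    {r : ℝ} (hr : 0 < r) :
    μ (closedBall x r) ≤ ((2 * C).toNNReal • volume) (closedBall x r) := by
  let f : ContDiffBump x := ⟨r, 2 * r, hr, by linarith⟩
  have hf := calc
    μ.real (closedBall x r) ≤ ∫ y, f y ∂μ := f.measure_closedBall_le_integral μ
    _ ≤ C * ∫ y, f y := hμ.integral_le f.continuous f.integrable (fun _ => f.nonneg)
        ⟨1, fun _ => by rw [abs_of_nonneg f.nonneg]; exact f.le_one⟩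
    _ ≤ C * volume.real (closedBall x (2 * r)) :=
        mul_le_mul_of_nonneg_left (f.integral_le_measure_closedBall volume) hμ.nonneg
    _ = 2 * C * (2 * r) := by
        rw [Measure.real, Real.volume_closedBall, ENNReal.toReal_ofReal (by positivity)]; ring
  rw [Measure.smul_apply, Real.volume_closedBall, ENNReal.smul_def, smul_eq_mul,
    ← ENNReal.ofReal.eq_def, ← ENNReal.ofReal_mul (by linarith [hμ.nonneg])]
  exact (ENNReal.le_ofReal_iff_toReal_le (measure_ne_top μ _) (by nlinarith [hμ.nonneg])).2 hf

end HasIntegrationByPartsBound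

theorem MeasureTheory.Measure.le_of_measure_closedBall_le {α : Type*} [MetricSpace α] [MeasurableSpace α]
    [BorelSpace α] [SecondCountableTopology α] [HasBesicovitchCovering α] {μ ν : Measure α}
    [SFinite μ] [IsLocallyFiniteMeasure ν]
    (h : ∀ x, ∀ r > 0, μ (closedBall x r) ≤ ν (closedBall x r)) : μ ≤ ν :=
  Measure.le_iff'.2 fun s =>
    (Besicovitch.vitaliFamily μ).measure_le_of_frequently_le ν .rfl s fun x _ =>
      (Besicovitch.tendsto_filterAt μ x).frequently
        (eventually_nhdsWithin_of_forall (s := Ioi 0) fun r hr => h x r hr).frequently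

theorem absolutelyContinuous_of_integration_by_parts_bound_general
    (μ : Measure ℝ) [IsProbabilityMeasure μ] (C : ℝ)
    (h : ∀ φ : ℝ → ℝ, ContDiff ℝ 1 φ → (∃ M, ∀ x, |φ x| ≤ M) →
      (∃ M, ∀ x, |deriv φ x| ≤ M) →
      |∫ x, deriv φ x ∂μ| ≤ C * ⨆ x, |φ x|) :
    μ ≪ volume :=
  have hμ : HasIntegrationByPartsBound μ C := h
  have hle : μ ≤ (2 * C).toNNReal • volume :=
    Measure.le_of_measure_closedBall_le fun x _ hr => hμ.measure_closedBall_le x hr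
  (Measure.absolutelyContinuous_of_le hle).trans (Measure.AbsolutelyContinuous.rfl.smul_left _)

/-- If a probability measure `μ` on `ℝ` satisfies
`|∫ φ' dμ| ≤ C ‖φ‖_∞` for all bounded `C¹` functions `φ` with bounded
derivative, then `μ` is absolutely continuous w.r.t. Lebesgue measure. -/
theorem absolutelyContinuous_of_integration_by_parts_bound
    (μ : Measure ℝ) [IsProbabilityMeasure μ] (C : ℝ) (hC : 0 < C)
    (h : ∀ φ : ℝ → ℝ, ContDiff ℝ 1 φ → (∃ M, ∀ x, |φ x| ≤ M) →
      (∃ M, ∀ x, |deriv φ x| ≤ M) →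
      |∫ x, deriv φ x ∂μ| ≤ C * ⨆ x, |φ x|) :
    μ ≪ volume :=
  absolutelyContinuous_of_integration_by_parts_bound_general μ C h
end
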